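/- arXiv:2101.07588 — 2 statements merged into one kernel-verified Lean document; each statement's English description precedes it below -/
import Mathlib

section
/- The Gaussian measure γ is locally doubling on admissible cubes: for every a > 0 there exists C = C(a,d) ≥ 1 such that γ(2Q) ≤ C·γ(Q) for all cubes Q ∈ 𝒬_a, where 2Q is the cube with the same center and doubled side length. -/
open MeasureTheory ENNReal Set

noncomputable section

abbrev E (d : ℕ) := EuclideanSpace ℝ (Fin d)

def gaussianM (d : ℕ) : Measure (E d) :=
  volume.withDensity fun x => ENNReal.ofReal (Real.pi ^ (-(d : ℝ)/2) * Real.exp (-‖x‖^2))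

def cube (d : ℕ) (c : E d) (l : ℝ) : Set (E d) := {x | ∀ i, |x i - c i| ≤ l / 2}

def mfun {d : ℕ} (x : E d) : ℝ := if ‖x‖ ≤ 1 then 1 else 1 / ‖x‖

def adm (d : ℕ) (a : ℝ) (c : E d) (l : ℝ) : Prop := 0 < l ∧ l ≤ a * mfun c

/-! For an admissible cube `Q` with centre `c` and side `l` and `x ∈ 2Q`, both `‖x - c‖ ≤ √d l` and
`‖c‖ l ≤ a` hold, so `‖x‖² = ‖c‖² + 2⟪c, x - c⟫ + ‖x - c‖²` differs from `‖c‖²` by at most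
`B = 2√d a + d a²` on all of `2Q`. Hence the Gaussian density on `2Q` is comparable to its value
at `c` up to the factor `exp B`, and `γ(2Q) ≤ 2ᵈ e^{2B} γ(Q)`. -/

lemma abs_norm_sq_sub_norm_sq_le {F : Type*} [NormedAddCommGroup F] [InnerProductSpace ℝ F]
    (x c : F) : |‖x‖ ^ 2 - ‖c‖ ^ 2| ≤ 2 * ‖c‖ * ‖x - c‖ + ‖x - c‖ ^ 2 := by
  have hexpand : ‖x‖ ^ 2 - ‖c‖ ^ 2 = 2 * inner ℝ c (x - c) + ‖x - c‖ ^ 2 := by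
    have := norm_add_sq_real c (x - c)
    rw [add_sub_cancel] at this
    linarith
  rw [hexpand]
  calc |2 * inner ℝ c (x - c) + ‖x - c‖ ^ 2|
      ≤ |2 * inner ℝ c (x - c)| + |‖x - c‖ ^ 2| := abs_add_le _ _
    _ ≤ 2 * ‖c‖ * ‖x - c‖ + ‖x - c‖ ^ 2 := by
      rw [abs_mul, abs_two, abs_sq, mul_assoc]
      gcongr
      exact abs_real_inner_le_norm c (x - c)

section Cube

variable {d : ℕ}

lemma cube_eq_preimage_pi (c : E d) (l : ℝ) :
    cube d c l = (MeasurableEquiv.toLp 2 (Fin d → ℝ)).symm ⁻¹'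
      univ.pi fun i => Icc (c i - l / 2) (c i + l / 2) := by
  ext x
  simp only [cube, mem_ofPred_eq, mem_preimage, mem_univ_pi, mem_Icc, abs_le]
  refine forall_congr' fun i => ?_
  change _ ↔ _ ≤ x i ∧ x i ≤ _
  constructor <;> rintro ⟨h₁, h₂⟩ <;> constructor <;> linarith

lemma measurableSet_cube (c : E d) (l : ℝ) : MeasurableSet (cube d c l) := by
  rw [cube_eq_preimage_pi]
  exact (MeasurableEquiv.toLp 2 (Fin d → ℝ)).symm.measurable
    (MeasurableSet.univ_pi fun _ => measurableSet_Icc)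

lemma volume_cube (c : E d) (l : ℝ) : volume (cube d c l) = ENNReal.ofReal l ^ d := by
  rw [cube_eq_preimage_pi,
    (EuclideanSpace.volume_preserving_symm_measurableEquiv_toLp (Fin d)).measure_preimage
      (MeasurableSet.univ_pi fun _ => measurableSet_Icc).nullMeasurableSet,
    volume_pi_pi]
  simp_rw [Real.volume_Icc, add_sub_sub_cancel, add_halves]
  simp

lemma volume_cube_two_mul (c : E d) (l : ℝ) :
    volume (cube d c (2 * l)) = 2 ^ d * volume (cube d c l) := by
  rw [volume_cube, volume_cube, ENNReal.ofReal_mul zero_le_two, ENNReal.ofReal_ofNat, mul_pow]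

lemma cube_subset_cube_two_mul (c : E d) {l : ℝ} (hl : 0 ≤ l) :
    cube d c l ⊆ cube d c (2 * l) :=
  fun _ hx i => (hx i).trans (by linarith)

lemma norm_sub_le_of_mem_cube {c x : E d} {l : ℝ} (hx : x ∈ cube d c l) :
    ‖x - c‖ ≤ √d * (l / 2) := by
  rcases Nat.eq_zero_or_pos d with rfl | hd
  · simp [Subsingleton.elim x c]
  have hl : 0 ≤ l / 2 := (abs_nonneg _).trans (hx ⟨0, hd⟩)
  rw [EuclideanSpace.norm_eq, ← Real.sqrt_sq hl, ← Real.sqrt_mul (Nat.cast_nonneg d)]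
  gcongr
  calc ∑ i, ‖(x - c) i‖ ^ 2 ≤ ∑ _i : Fin d, (l / 2) ^ 2 := by
        gcongr with i
        exact hx i
    _ = d * (l / 2) ^ 2 := by simp

end Cube

section Gaussian

variable {d : ℕ} {s : Set (E d)}

lemma gaussianM_le_of_le_norm_sq (hs : MeasurableSet s) {b : ℝ} (h : ∀ x ∈ s, b ≤ ‖x‖ ^ 2) :
    gaussianM d s ≤ ENNReal.ofReal (Real.pi ^ (-(d : ℝ) / 2) * Real.exp (-b)) * volume s := by
  rw [gaussianM, withDensity_apply _ hs, ← setLIntegral_const]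
  refine setLIntegral_mono' hs fun x hx => ?_
  gcongr
  exact h x hx

lemma le_gaussianM_of_norm_sq_le (hs : MeasurableSet s) {b : ℝ} (h : ∀ x ∈ s, ‖x‖ ^ 2 ≤ b) :
    ENNReal.ofReal (Real.pi ^ (-(d : ℝ) / 2) * Real.exp (-b)) * volume s ≤ gaussianM d s := by
  rw [gaussianM, withDensity_apply _ hs, ← setLIntegral_const]
  refine setLIntegral_mono' hs fun x hx => ?_
  gcongr
  exact h x hx

end Gaussian

lemma mfun_pos {d : ℕ} (x : E d) : 0 < mfun x := by
  unfold mfun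
  split_ifs with h
  · exact one_pos
  · exact one_div_pos.2 (by linarith)

lemma norm_mul_mfun_le_one {d : ℕ} (x : E d) : ‖x‖ * mfun x ≤ 1 := by
  unfold mfun
  split_ifs with h
  · simpa using h
  · rw [mul_one_div_cancel (by linarith)]

lemma mfun_le_one {d : ℕ} (x : E d) : mfun x ≤ 1 := by
  unfold mfun
  split_ifs with h
  · rfl
  · exact (div_le_one (by linarith)).2 (by linarith)

namespace adm

variable {d : ℕ} {a l : ℝ} {c : E d}

lemma pos_left (h : adm d a c l) : 0 < a :=
  pos_of_mul_pos_left (h.1.trans_le h.2) (mfun_pos c).le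

lemma le_left (h : adm d a c l) : l ≤ a :=
  h.2.trans (mul_le_of_le_one_right h.pos_left.le (mfun_le_one c))

lemma norm_mul_le (h : adm d a c l) : ‖c‖ * l ≤ a :=
  calc ‖c‖ * l ≤ ‖c‖ * (a * mfun c) := by gcongr; exact h.2
    _ = a * (‖c‖ * mfun c) := by ring
    _ ≤ a := mul_le_of_le_one_right h.pos_left.le (norm_mul_mfun_le_one c)

lemma abs_norm_sq_sub_le (h : adm d a c l) {x : E d} (hx : x ∈ cube d c (2 * l)) :
    |‖x‖ ^ 2 - ‖c‖ ^ 2| ≤ 2 * √d * a + d * a ^ 2 := by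
  have hxc : ‖x - c‖ ≤ √d * l := by simpa using norm_sub_le_of_mem_cube hx
  calc |‖x‖ ^ 2 - ‖c‖ ^ 2| ≤ 2 * ‖c‖ * ‖x - c‖ + ‖x - c‖ ^ 2 := abs_norm_sq_sub_norm_sq_le x c
    _ ≤ 2 * ‖c‖ * (√d * l) + (√d * l) ^ 2 := by gcongr
    _ = 2 * √d * (‖c‖ * l) + √d ^ 2 * l ^ 2 := by ring
    _ ≤ 2 * √d * a + d * a ^ 2 := by
      rw [Real.sq_sqrt (Nat.cast_nonneg d)]
      gcongr
      · exact h.norm_mul_le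
      · exact h.1.le
      · exact h.le_left

end adm

/-- The Gaussian measure is locally doubling on admissible cubes: for each `a > 0` there is
`C = C(a,d) ≥ 1` with `γ(2Q) ≤ C γ(Q)` for all `Q ∈ 𝒬_a`. -/
theorem gaussian_locally_doubling (d : ℕ) (a : ℝ) (ha : 0 < a) :
    ∃ C : ℝ, 1 ≤ C ∧ ∀ (c : E d) (l : ℝ), adm d a c l →
      gaussianM d (cube d c (2 * l)) ≤ ENNReal.ofReal C * gaussianM d (cube d c l) := by
  set B := 2 * √d * a + d * a ^ 2
  refine ⟨2 ^ d * Real.exp (2 * B), one_le_mul_of_one_le_of_one_le (one_le_pow₀ one_le_two)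
    (Real.one_le_exp (by positivity)), fun c l h => ?_⟩
  set K := Real.pi ^ (-(d : ℝ) / 2)
  have hupper := gaussianM_le_of_le_norm_sq (measurableSet_cube c (2 * l)) (b := ‖c‖ ^ 2 - B)
    fun x hx => by linarith [(abs_le.1 (h.abs_norm_sq_sub_le hx)).1]
  have hlower := le_gaussianM_of_norm_sq_le (measurableSet_cube c l) (b := ‖c‖ ^ 2 + B)
    fun x hx => by
      linarith [(abs_le.1 (h.abs_norm_sq_sub_le (cube_subset_cube_two_mul c h.1.le hx))).2]
  calc gaussianM d (cube d c (2 * l))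
      ≤ ENNReal.ofReal (K * Real.exp (-(‖c‖ ^ 2 - B))) * (2 ^ d * volume (cube d c l)) := by
        rwa [← volume_cube_two_mul]
    _ = ENNReal.ofReal (2 ^ d * Real.exp (2 * B)) *
          (ENNReal.ofReal (K * Real.exp (-(‖c‖ ^ 2 + B))) * volume (cube d c l)) := by
        have hpow : (2 : ℝ≥0∞) ^ d = ENNReal.ofReal (2 ^ d) := by
          rw [ENNReal.ofReal_pow zero_le_two, ENNReal.ofReal_ofNat]
        rw [← mul_assoc, ← mul_assoc, hpow, ← ENNReal.ofReal_mul (by positivity),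
          ← ENNReal.ofReal_mul (by positivity)]
        congr 2
        rw [mul_comm, mul_assoc, mul_left_comm (Real.exp _) K, ← Real.exp_add]
        ring_nf
    _ ≤ _ := by gcongr

end
end

section
/- Let u'(x) = u(x) e^{−(1−α̇)|x|²} and v'(x) = v(x) e^{−(1−α̇)|x|²}. Then (u,v) ∈ A^a_{p,q,α} if and only if (u',v') ∈ 𝒜^a_{p,q,α}, i.e., the Gaussian-measure Muckenhoupt condition with respect to γ is equivalent to the corresponding radialized condition with respect to the measure dγ'(x) = e^{−α̇|x|²} dx. -/
open MeasureTheory ENNReal Set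

noncomputable section

/-- The radialized measure `dγ'(x) = e^{-(α/d)|x|²} dx`. -/
def gammaRad (d : ℕ) (α : ℝ) : Measure (E d) :=
  volume.withDensity fun x => ENNReal.ofReal (Real.exp (-(α/d) * ‖x‖^2))

def pconj (p : ℝ) : ℝ := p / (p - 1)

/-- The Gaussian two-weight Muckenhoupt constant `[u,v]_{A^a_{p,q,α}}`. -/
def Aconst (d : ℕ) (a p q α : ℝ) (u v : E d → ℝ≥0∞) : ℝ≥0∞ :=
  ⨆ (c : E d) (l : ℝ) (_ : adm d a c l),
    gaussianM d (cube d c l) ^ (α/d + 1/q - 1/p) *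
    ((gaussianM d (cube d c l))⁻¹ * ∫⁻ x in cube d c l, u x ∂(gaussianM d)) ^ (1/q) *
    ((gaussianM d (cube d c l))⁻¹ *
        ∫⁻ x in cube d c l, v x ^ (1 - pconj p) ∂(gaussianM d)) ^ (1/(pconj p))

/-- The radialized constant `[u,v]_{𝒜^a_{p,q,α}}` with respect to `γ'`. -/
def Arad (d : ℕ) (a p q α : ℝ) (u v : E d → ℝ≥0∞) : ℝ≥0∞ :=
  ⨆ (c : E d) (l : ℝ) (_ : adm d a c l),
    ENNReal.ofReal (l ^ (α - d)) *
    (∫⁻ x in cube d c l, u x ∂(gammaRad d α)) ^ (1/q) *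
    (∫⁻ x in cube d c l, v x ^ (1 - pconj p) ∂(gammaRad d α)) ^ (1/(pconj p))

/-! On an admissible cube `Q` with centre `c`, `|‖x‖² - ‖c‖²|` is bounded by a constant depending
only on `a` and `d`, so on `Q` every Gaussian weight `e^{s‖x‖²}` is comparable to its value
`e^{s‖c‖²}` at the centre, uniformly in `Q`. Freezing all weights at the centre turns the
`γ`-term and the `γ'`-term of `Q` into the same expression
`l^{α-d} e^{-(α/d+1/q-1/p)‖c‖²} (∫_Q u)^{1/q} (∫_Q v^{1-p'})^{1/p'}`, up to the power of the
normalising constant of `γ`, and a uniform two-sided comparison passes to the suprema. -/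

open Real

namespace GaussMuckenhoupt

theorem ofReal_exp_ne_zero (t : ℝ) : ENNReal.ofReal (exp t) ≠ 0 :=
  ENNReal.ofReal_ne_zero_iff.2 (exp_pos t)

theorem ofReal_exp_add (s t : ℝ) :
    ENNReal.ofReal (exp (s + t)) = ENNReal.ofReal (exp s) * ENNReal.ofReal (exp t) := by
  rw [exp_add, ENNReal.ofReal_mul (exp_pos s).le]

theorem ofReal_exp_rpow (t r : ℝ) : ENNReal.ofReal (exp t) ^ r = ENNReal.ofReal (exp (t * r)) := by
  rw [ENNReal.ofReal_rpow_of_pos (exp_pos t), ← exp_mul]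

theorem ofReal_exp_mul_rpow (t : ℝ) (x : ℝ≥0∞) (r : ℝ) :
    (ENNReal.ofReal (exp t) * x) ^ r = ENNReal.ofReal (exp (t * r)) * x ^ r := by
  simp [ENNReal.mul_rpow_eq_ite, (exp_pos t).not_ge, ofReal_exp_rpow]

theorem inv_mul_rpow {g : ℝ≥0∞} (hg₀ : g ≠ 0) (hg : g ≠ ⊤) (x : ℝ≥0∞) (r : ℝ) :
    (g⁻¹ * x) ^ r = g ^ (-r) * x ^ r := by
  simp [ENNReal.mul_rpow_eq_ite, hg₀, hg, ENNReal.inv_rpow, ENNReal.rpow_neg]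

def Comparable (K : ℝ) (x y : ℝ≥0∞) : Prop :=
  x ≤ ENNReal.ofReal (exp K) * y ∧ y ≤ ENNReal.ofReal (exp K) * x

namespace Comparable

variable {K K' : ℝ} {x y z x' y' : ℝ≥0∞}

theorem refl (x : ℝ≥0∞) : Comparable 0 x x := by
  simp [Comparable]

theorem symm (h : Comparable K x y) : Comparable K y x := ⟨h.2, h.1⟩

theorem trans (h : Comparable K x y) (h' : Comparable K' y z) : Comparable (K + K') x z := by
  refine ⟨h.1.trans ?_, h'.2.trans ?_⟩
  · rw [ofReal_exp_add, mul_assoc]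
    exact mul_le_mul_right h'.1 _
  · rw [ofReal_exp_add, mul_comm (ENNReal.ofReal (exp K)), mul_assoc]
    exact mul_le_mul_right h.2 _

theorem mul (h : Comparable K x y) (h' : Comparable K' x' y') :
    Comparable (K + K') (x * x') (y * y') := by
  rw [Comparable, ofReal_exp_add, mul_mul_mul_comm, mul_mul_mul_comm _ _ x]
  exact ⟨mul_le_mul' h.1 h'.1, mul_le_mul' h.2 h'.2⟩

theorem inv (h : Comparable K x y) : Comparable K x⁻¹ y⁻¹ := by
  have key {a b : ℝ≥0∞} (hab : a ≤ ENNReal.ofReal (exp K) * b) :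
      b⁻¹ ≤ ENNReal.ofReal (exp K) * a⁻¹ :=
    calc b⁻¹ = ENNReal.ofReal (exp K) * (ENNReal.ofReal (exp K) * b)⁻¹ := by
          rw [ENNReal.mul_inv (.inl (ofReal_exp_ne_zero K)) (.inl ENNReal.ofReal_ne_top),
            ← mul_assoc, ENNReal.mul_inv_cancel (ofReal_exp_ne_zero K) ENNReal.ofReal_ne_top,
            one_mul]
      _ ≤ ENNReal.ofReal (exp K) * a⁻¹ := mul_le_mul_right (ENNReal.inv_le_inv' hab) _
  exact ⟨key h.2, key h.1⟩

theorem rpow_of_nonneg (h : Comparable K x y) {r : ℝ} (hr : 0 ≤ r) :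
    Comparable (K * r) (x ^ r) (y ^ r) := by
  rw [Comparable, ← ofReal_exp_rpow, ← ENNReal.mul_rpow_of_nonneg _ _ hr,
    ← ENNReal.mul_rpow_of_nonneg _ _ hr]
  exact ⟨ENNReal.rpow_le_rpow h.1 hr, ENNReal.rpow_le_rpow h.2 hr⟩

theorem rpow (h : Comparable K x y) (r : ℝ) : Comparable (K * |r|) (x ^ r) (y ^ r) := by
  rcases le_total 0 r with hr | hr
  · rw [abs_of_nonneg hr]
    exact h.rpow_of_nonneg hr
  · have hinv (z : ℝ≥0∞) : z⁻¹ ^ (-r) = z ^ r := by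
      rw [ENNReal.inv_rpow, ENNReal.rpow_neg, inv_inv]
    simpa only [abs_of_nonpos hr, hinv] using h.inv.rpow_of_nonneg (neg_nonneg.2 hr)

theorem ne_top (h : Comparable K x y) (hy : y ≠ ⊤) : x ≠ ⊤ :=
  ne_top_of_le_ne_top (ENNReal.mul_ne_top ENNReal.ofReal_ne_top hy) h.1

theorem ne_zero (h : Comparable K x y) (hy : y ≠ 0) : x ≠ 0 := by
  rintro rfl
  exact hy (by simpa using h.2)

theorem lt_top_iff (h : Comparable K x y) : x < ⊤ ↔ y < ⊤ :=
  ⟨fun hx => (h.symm.ne_top hx.ne).lt_top, fun hy => (h.ne_top hy.ne).lt_top⟩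

theorem iSup {ι : Sort*} {f g : ι → ℝ≥0∞} (h : ∀ i, Comparable K (f i) (g i)) :
    Comparable K (⨆ i, f i) (⨆ i, g i) := by
  rw [Comparable, ENNReal.mul_iSup, ENNReal.mul_iSup]
  exact ⟨iSup_mono fun i => (h i).1, iSup_mono fun i => (h i).2⟩

theorem setLIntegral {Ω : Type*} [MeasurableSpace Ω] {μ : Measure Ω} {s : Set Ω}
    (hs : MeasurableSet s) {f g : Ω → ℝ≥0∞} (h : ∀ x ∈ s, Comparable K (f x) (g x)) :
    Comparable K (∫⁻ x in s, f x ∂μ) (∫⁻ x in s, g x ∂μ) := by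
  rw [Comparable, ← lintegral_const_mul' _ _ ENNReal.ofReal_ne_top,
    ← lintegral_const_mul' _ _ ENNReal.ofReal_ne_top]
  exact ⟨setLIntegral_mono' hs fun x hx => (h x hx).1, setLIntegral_mono' hs fun x hx => (h x hx).2⟩

end Comparable

theorem comparable_ofReal_exp {s t K : ℝ} (h : |s - t| ≤ K) :
    Comparable K (ENNReal.ofReal (exp s)) (ENNReal.ofReal (exp t)) := by
  simp only [Comparable, ← ofReal_exp_add]
  constructor <;> gcongr <;> linarith [abs_le.1 h]

theorem abs_sq_norm_sub_sq_norm_le {F : Type*} [SeminormedAddCommGroup F] (x y : F) :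
    |‖x‖ ^ 2 - ‖y‖ ^ 2| ≤ ‖x - y‖ * (2 * ‖y‖ + ‖x - y‖) := by
  rw [sq_sub_sq, abs_mul, abs_of_nonneg (by positivity : 0 ≤ ‖x‖ + ‖y‖), mul_comm]
  exact mul_le_mul (abs_norm_sub_norm_le x y) (by linarith [norm_le_norm_add_norm_sub' x y])
    (by positivity) (norm_nonneg _)

theorem cube_eq_preimage (d : ℕ) (c : E d) (l : ℝ) :
    cube d c l = (MeasurableEquiv.toLp 2 (Fin d → ℝ)).symm ⁻¹'
      Set.univ.pi fun i => Set.Icc (c i - l / 2) (c i + l / 2) := by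
  ext x
  simp only [cube, Set.mem_ofPred_eq, Set.mem_preimage, Set.mem_univ_pi, Set.mem_Icc, abs_le]
  refine forall_congr' fun i => ?_
  change _ ↔ c i - l / 2 ≤ x i ∧ x i ≤ c i + l / 2
  constructor <;> rintro ⟨h₁, h₂⟩ <;> constructor <;> linarith

theorem measurableSet_cube (d : ℕ) (c : E d) (l : ℝ) : MeasurableSet (cube d c l) := by
  rw [cube_eq_preimage]
  exact (MeasurableEquiv.toLp 2 (Fin d → ℝ)).symm.measurable
    (MeasurableSet.univ_pi fun _ => measurableSet_Icc)

theorem volume_cube (d : ℕ) (c : E d) (l : ℝ) : volume (cube d c l) = ENNReal.ofReal l ^ d := by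
  rw [cube_eq_preimage, (EuclideanSpace.volume_preserving_symm_measurableEquiv_toLp
    (Fin d)).measure_preimage (MeasurableSet.univ_pi fun _ => measurableSet_Icc).nullMeasurableSet,
    volume_pi_pi]
  simp [Real.volume_Icc]

theorem norm_sub_le_of_mem_cube {d : ℕ} {c x : E d} {l : ℝ} (hl : 0 ≤ l) (hx : x ∈ cube d c l) :
    ‖x - c‖ ≤ √d * (l / 2) := by
  rw [EuclideanSpace.norm_eq, ← Real.sqrt_sq (by positivity : 0 ≤ l / 2),
    ← Real.sqrt_mul (Nat.cast_nonneg d)]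
  refine Real.sqrt_le_sqrt ?_
  calc ∑ i, ‖(x - c) i‖ ^ 2 ≤ ∑ _i : Fin d, (l / 2) ^ 2 :=
        Finset.sum_le_sum fun i _ => pow_le_pow_left₀ (norm_nonneg _) (hx i) 2
    _ = d * (l / 2) ^ 2 := by simp

theorem mfun_pos {d : ℕ} (c : E d) : 0 < mfun c := by
  unfold mfun
  split_ifs with h
  · exact one_pos
  · exact one_div_pos.2 (by linarith)

theorem mfun_le_one {d : ℕ} (c : E d) : mfun c ≤ 1 := by
  unfold mfun
  split_ifs with h
  · exact le_rfl
  · exact (div_le_one (by linarith)).2 (by linarith)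

theorem mfun_mul_norm_le_one {d : ℕ} (c : E d) : mfun c * ‖c‖ ≤ 1 := by
  unfold mfun
  split_ifs with h
  · simpa using h
  · rw [one_div_mul_cancel (by linarith)]

theorem abs_sq_norm_sub_sq_norm_le_of_adm {d : ℕ} {a l : ℝ} {c x : E d} (h : adm d a c l)
    (hx : x ∈ cube d c l) : |‖x‖ ^ 2 - ‖c‖ ^ 2| ≤ √d * a + d * a ^ 2 / 4 := by
  obtain ⟨hl, hla⟩ := h
  have ha : 0 < a := pos_of_mul_pos_left (hl.trans_le hla) (mfun_pos c).le
  have hl_le : l ≤ a := hla.trans (mul_le_of_le_one_right ha.le (mfun_le_one c))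
  have hlc : l * ‖c‖ ≤ a :=
    calc l * ‖c‖ ≤ a * (mfun c * ‖c‖) := by rw [← mul_assoc]; gcongr
      _ ≤ a := mul_le_of_le_one_right ha.le (mfun_mul_norm_le_one c)
  calc |‖x‖ ^ 2 - ‖c‖ ^ 2| ≤ ‖x - c‖ * (2 * ‖c‖ + ‖x - c‖) := abs_sq_norm_sub_sq_norm_le x c
    _ ≤ √d * (l / 2) * (2 * ‖c‖ + √d * (l / 2)) := by
        have := norm_sub_le_of_mem_cube hl.le hx
        gcongr
    _ = √d * (l * ‖c‖) + √d ^ 2 * l ^ 2 / 4 := by ring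
    _ ≤ √d * a + d * a ^ 2 / 4 := by
        rw [Real.sq_sqrt (Nat.cast_nonneg d)]
        gcongr

section WeightedIntegrals

variable {Ω : Type*} [MeasurableSpace Ω] {μ : Measure Ω} {s : Set Ω}

theorem comparable_setLIntegral_ofReal_exp_mul (hs : MeasurableSet s) {φ : Ω → ℝ} {t K : ℝ}
    (hφ : ∀ x ∈ s, |φ x - t| ≤ K) (f : Ω → ℝ≥0∞) :
    Comparable K (∫⁻ x in s, ENNReal.ofReal (exp (φ x)) * f x ∂μ)
      (ENNReal.ofReal (exp t) * ∫⁻ x in s, f x ∂μ) := by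
  rw [← lintegral_const_mul' _ _ ENNReal.ofReal_ne_top]
  simpa only [add_zero] using Comparable.setLIntegral (μ := μ) hs fun x hx =>
    (comparable_ofReal_exp (hφ x hx)).mul (Comparable.refl (f x))

theorem setLIntegral_withDensity_ofReal_exp {φ : Ω → ℝ} (hφ : Measurable φ)
    (hs : MeasurableSet s) (f : Ω → ℝ≥0∞) :
    ∫⁻ x in s, f x ∂μ.withDensity (fun x => ENNReal.ofReal (exp (φ x))) =
      ∫⁻ x in s, ENNReal.ofReal (exp (φ x)) * f x ∂μ :=
  setLIntegral_withDensity_eq_setLIntegral_mul_non_measurable _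
    (measurable_exp.comp hφ).ennreal_ofReal f hs (ae_of_all _ fun _ => ENNReal.ofReal_lt_top)

end WeightedIntegrals

theorem gaussianM_eq_withDensity (d : ℕ) :
    gaussianM d = volume.withDensity fun x =>
      ENNReal.ofReal (exp (log π * (-(d : ℝ) / 2) - ‖x‖ ^ 2)) := by
  unfold gaussianM
  congr 1
  funext x
  rw [rpow_def_of_pos pi_pos, ← exp_add, sub_eq_add_neg]

section AdmissibleCube

variable {d : ℕ} {c : E d} {l K : ℝ}

theorem comparable_setLIntegral_gaussianM (hK : ∀ x ∈ cube d c l, |‖x‖ ^ 2 - ‖c‖ ^ 2| ≤ K)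
    (f : E d → ℝ≥0∞) :
    Comparable K (∫⁻ x in cube d c l, f x ∂gaussianM d)
      (ENNReal.ofReal (exp (log π * (-(d : ℝ) / 2) - ‖c‖ ^ 2)) * ∫⁻ x in cube d c l, f x) := by
  rw [gaussianM_eq_withDensity, setLIntegral_withDensity_ofReal_exp (by fun_prop)
    (measurableSet_cube d c l)]
  refine comparable_setLIntegral_ofReal_exp_mul (measurableSet_cube d c l) (fun x hx => ?_) f
  convert hK x hx using 1
  rw [abs_sub_comm]
  ring_nf

theorem comparable_gaussianM_cube (hK : ∀ x ∈ cube d c l, |‖x‖ ^ 2 - ‖c‖ ^ 2| ≤ K)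
    (hl : 0 < l) :
    Comparable K (gaussianM d (cube d c l))
      (ENNReal.ofReal (exp (log π * (-(d : ℝ) / 2) - ‖c‖ ^ 2 + d * log l))) := by
  rw [ofReal_exp_add, exp_nat_mul, exp_log hl, ENNReal.ofReal_pow hl.le, ← volume_cube,
    ← setLIntegral_one, ← setLIntegral_one]
  exact comparable_setLIntegral_gaussianM hK 1

theorem comparable_setLIntegral_rpow_gammaRad (hK : ∀ x ∈ cube d c l, |‖x‖ ^ 2 - ‖c‖ ^ 2| ≤ K)
    (α : ℝ) (f : E d → ℝ≥0∞) (s r : ℝ) :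
    Comparable (|s * r - α / d| * K)
      (∫⁻ x in cube d c l, (f x * ENNReal.ofReal (exp (s * ‖x‖ ^ 2))) ^ r ∂gammaRad d α)
      (ENNReal.ofReal (exp ((s * r - α / d) * ‖c‖ ^ 2)) * ∫⁻ x in cube d c l, f x ^ r) := by
  have hQ := measurableSet_cube d c l
  have hweight (x : E d) : ENNReal.ofReal (exp (-(α / d) * ‖x‖ ^ 2)) *
      (f x * ENNReal.ofReal (exp (s * ‖x‖ ^ 2))) ^ r =
      ENNReal.ofReal (exp ((s * r - α / d) * ‖x‖ ^ 2)) * f x ^ r := by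
    rw [mul_comm (f x), ofReal_exp_mul_rpow, ← mul_assoc, ← ofReal_exp_add]
    ring_nf
  rw [gammaRad, setLIntegral_withDensity_ofReal_exp (by fun_prop) hQ]
  simp only [hweight]
  refine comparable_setLIntegral_ofReal_exp_mul hQ (fun x hx => ?_) _
  rw [← mul_sub, abs_mul]
  exact mul_le_mul_of_nonneg_left (hK x hx) (abs_nonneg _)

end AdmissibleCube

theorem ofReal_exp_mul_mul_mul (A B C : ℝ) (x y : ℝ≥0∞) :
    ENNReal.ofReal (exp A) * (ENNReal.ofReal (exp B) * x) * (ENNReal.ofReal (exp C) * y) =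
      ENNReal.ofReal (exp (A + B + C)) * (x * y) := by
  rw [ofReal_exp_add, ofReal_exp_add]
  ring

theorem comparable_ofReal_exp_mul_ofReal_exp_mul {s t k : ℝ} (h : s - t = k) (x : ℝ≥0∞) :
    Comparable |k| (ENNReal.ofReal (exp s) * x) (ENNReal.ofReal (exp t) * x) := by
  simpa only [add_zero] using (comparable_ofReal_exp (h ▸ le_rfl)).mul (Comparable.refl x)

theorem one_div_add_one_div_pconj {p : ℝ} (hp : 1 < p) : 1 / p + 1 / pconj p = 1 := by
  unfold pconj
  field_simp [(by linarith : p - 1 ≠ 0)]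
  ring

-- `Aconst` and `Arad` are by definition the suprema of these terms over admissible cubes.
def gaussTerm (d : ℕ) (p q α : ℝ) (u v : E d → ℝ≥0∞) (c : E d) (l : ℝ) : ℝ≥0∞ :=
  gaussianM d (cube d c l) ^ (α/d + 1/q - 1/p) *
    ((gaussianM d (cube d c l))⁻¹ * ∫⁻ x in cube d c l, u x ∂(gaussianM d)) ^ (1/q) *
    ((gaussianM d (cube d c l))⁻¹ *
        ∫⁻ x in cube d c l, v x ^ (1 - pconj p) ∂(gaussianM d)) ^ (1/(pconj p))

def radTerm (d : ℕ) (p q α : ℝ) (u v : E d → ℝ≥0∞) (c : E d) (l : ℝ) : ℝ≥0∞ :=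
  ENNReal.ofReal (l ^ (α - d)) *
    (∫⁻ x in cube d c l, u x ∂(gammaRad d α)) ^ (1/q) *
    (∫⁻ x in cube d c l, v x ^ (1 - pconj p) ∂(gammaRad d α)) ^ (1/(pconj p))

theorem gaussTerm_eq {d : ℕ} {p : ℝ} (hp : 1 < p) (q α : ℝ) (u v : E d → ℝ≥0∞) {c : E d} {l : ℝ}
    (h₀ : gaussianM d (cube d c l) ≠ 0) (h : gaussianM d (cube d c l) ≠ ⊤) :
    gaussTerm d p q α u v c l = gaussianM d (cube d c l) ^ (α / d - 1) *
      (∫⁻ x in cube d c l, u x ∂(gaussianM d)) ^ (1 / q) *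
      (∫⁻ x in cube d c l, v x ^ (1 - pconj p) ∂(gaussianM d)) ^ (1 / pconj p) := by
  have hexp : α / d - 1 = (α / d + 1 / q - 1 / p) + -(1 / q) + -(1 / pconj p) := by
    linarith [one_div_add_one_div_pconj hp]
  rw [gaussTerm, inv_mul_rpow h₀ h, inv_mul_rpow h₀ h, hexp, ENNReal.rpow_add _ _ h₀ h,
    ENNReal.rpow_add _ _ h₀ h]
  ring

theorem exists_comparable_gaussTerm_radTerm {d : ℕ} (hd : (d : ℝ) ≠ 0) {p : ℝ} (hp : 1 < p)
    (q α : ℝ) (u v : E d → ℝ≥0∞) (K : ℝ) :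
    ∃ M, ∀ (c : E d) (l : ℝ), 0 < l → (∀ x ∈ cube d c l, |‖x‖ ^ 2 - ‖c‖ ^ 2| ≤ K) →
      Comparable M (gaussTerm d p q α u v c l)
        (radTerm d p q α (fun x => u x * ENNReal.ofReal (exp (-(1 - α / d) * ‖x‖ ^ 2)))
          (fun x => v x * ENNReal.ofReal (exp (-(1 - α / d) * ‖x‖ ^ 2))) c l) := by
  -- `M` is fixed by unification with the comparison chain below, which involves neither `c`
  -- nor `l`.
  constructor
  intro c l hl hK
  have hγ := comparable_gaussianM_cube hK hl
  have hU := comparable_setLIntegral_gaussianM hK u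
  have hV := comparable_setLIntegral_gaussianM hK fun x => v x ^ (1 - pconj p)
  have hU' := comparable_setLIntegral_rpow_gammaRad hK α u (-(1 - α / d)) 1
  have hV' := comparable_setLIntegral_rpow_gammaRad hK α v (-(1 - α / d)) (1 - pconj p)
  simp only [ENNReal.rpow_one, mul_one] at hU'
  have hgauss := ((hγ.rpow (α / d - 1)).mul (hU.rpow (1 / q))).mul (hV.rpow (1 / pconj p))
  have hrad := ((Comparable.refl (ENNReal.ofReal (exp (log l * (α - d))))).mul
    (hU'.rpow (1 / q))).mul (hV'.rpow (1 / pconj p))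
  rw [ofReal_exp_rpow, ofReal_exp_mul_rpow, ofReal_exp_mul_rpow, ofReal_exp_mul_mul_mul] at hgauss
  rw [ofReal_exp_mul_rpow, ofReal_exp_mul_rpow, ofReal_exp_mul_mul_mul] at hrad
  rw [gaussTerm_eq hp q α u v (hγ.ne_zero (ofReal_exp_ne_zero _)) (hγ.ne_top ENNReal.ofReal_ne_top),
    radTerm, rpow_def_of_pos hl]
  -- `k` is the logarithm of `(π^{-d/2})^{α/d+1/q-1/p}`, contributed by the normalisation of `γ`.
  refine hgauss.trans (Comparable.trans (comparable_ofReal_exp_mul_ofReal_exp_mul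
    (k := log π * (-(d : ℝ) / 2) * (α / d + 1 / q - 1 / p)) ?_ _) hrad.symm)
  have hpconj : pconj p * (1 / pconj p) = 1 :=
    mul_one_div_cancel (div_ne_zero (by linarith) (by linarith))
  have hα : (d : ℝ) * (α / d) = α := mul_div_cancel₀ α hd
  linear_combination log π * (-(d : ℝ) / 2) * one_div_add_one_div_pconj hp
    - (1 - α / d) * ‖c‖ ^ 2 * hpconj + log l * hα

end GaussMuckenhoupt

open GaussMuckenhoupt

theorem A_iff_Arad_general (d : ℕ) (a p q α : ℝ)
    (hp : 1 < p) (hα : 0 ≤ α) (hαd : α < d)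
    (u v : E d → ℝ≥0∞) :
    Aconst d a p q α u v < ∞ ↔
      Arad d a p q α
        (fun x => u x * ENNReal.ofReal (Real.exp (-(1 - α/d) * ‖x‖^2)))
        (fun x => v x * ENNReal.ofReal (Real.exp (-(1 - α/d) * ‖x‖^2))) < ∞ := by
  obtain ⟨M, hM⟩ := exists_comparable_gaussTerm_radTerm (hα.trans_lt hαd).ne' hp q α u v
    (√d * a + d * a ^ 2 / 4)
  exact (Comparable.iSup fun c => Comparable.iSup fun l => Comparable.iSup fun h : adm d a c l =>
    hM c l h.1 fun x hx => abs_sq_norm_sub_sq_norm_le_of_adm h hx).lt_top_iff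

/-- With `u'(x) = u(x)e^{-(1-α/d)|x|²}` and `v'(x) = v(x)e^{-(1-α/d)|x|²}`, one has
`(u,v) ∈ A^a_{p,q,α}` if and only if `(u',v') ∈ 𝒜^a_{p,q,α}`. -/
theorem A_iff_Arad (d : ℕ) (a p q α : ℝ) (ha : 0 < a)
    (hp : 1 < p) (hpq : p ≤ q) (hα : 0 ≤ α) (hαd : α < d)
    (u v : E d → ℝ≥0∞) (hu : Measurable u) (hv : Measurable v) :
    Aconst d a p q α u v < ∞ ↔
      Arad d a p q α
        (fun x => u x * ENNReal.ofReal (Real.exp (-(1 - α/d) * ‖x‖^2)))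
        (fun x => v x * ENNReal.ofReal (Real.exp (-(1 - α/d) * ‖x‖^2))) < ∞ :=
  A_iff_Arad_general d a p q α hp hα hαd u v

end
end
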